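/- arXiv:2210.13203 — 3 statements merged into one kernel-verified Lean document; each statement's English description precedes it below -/
import Mathlib

section
/- Let Γ be a countable amenable group and let A, B ⊆ Γ be such that m(A) < m(B) for every Γ-invariant finitely additive probability measure m on Γ. Then there exist n ≥ 1, a partition A = A₁ ⊔ ⋯ ⊔ Aₙ, and γ₁, …, γₙ ∈ Γ such that the sets γ₁A₁, …, γₙAₙ are pairwise disjoint and all contained in B. -/
open MeasureTheory Set
open scoped ENNReal

/-! Preliminary definitions: the clopen type semigroup of an action of a group `Γ`
by homeomorphisms on a topological space `X`, invariant measures, dynamical comparison,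
topological full groups, and the topology on spaces of actions. -/

/-- The group of self-homeomorphisms of `X`, with `(g * h) x = g (h x)`. -/
instance homeoGroup (X : Type*) [TopologicalSpace X] : Group (X ≃ₜ X) where
  mul g h := h.trans g
  one := Homeomorph.refl X
  inv := Homeomorph.symm
  mul_assoc a b c := Homeomorph.ext fun _ => rfl
  one_mul a := Homeomorph.ext fun _ => rfl
  mul_one a := Homeomorph.ext fun _ => rfl
  inv_mul_cancel a := Homeomorph.ext fun x => a.symm_apply_apply x

/-- The Cantor space `{0,1}^ℕ`. -/
abbrev Cantor : Type := ℕ → Bool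

section Defs

variable {Γ : Type*} [Group Γ] {X : Type*} [TopologicalSpace X]

/-- A left-invariant finitely additive probability measure on (the power set of) `Γ`,
with values in `[0,1]`. `Γ` is amenable iff such a measure exists. -/
def IsInvFapm {Γ : Type*} [Group Γ] (m : Set Γ → ℝ) : Prop :=
  (∀ E : Set Γ, 0 ≤ m E) ∧ (∀ E : Set Γ, m E ≤ 1) ∧ m Set.univ = 1 ∧
  (∀ E F : Set Γ, Disjoint E F → m (E ∪ F) = m E + m F) ∧
  (∀ (γ : Γ) (E : Set Γ), m ((γ * ·) '' E) = m E)

/-- The action of `γ ∈ Γ` on continuous `ℕ`-valued functions: `(γ · f)(x) = f(γ⁻¹ · x)`. -/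
def actC (α : Γ →* X ≃ₜ X) (γ : Γ) (f : C(X, ℕ)) : C(X, ℕ) :=
  f.comp (α γ⁻¹)

/-- The equidecomposability relation `∼` on `C(X, ℕ)`: `f ∼ g` iff `f = h₁ + ⋯ + hₙ`
and `g = γ₁·h₁ + ⋯ + γₙ·hₙ` for some `hᵢ ∈ C(X,ℕ)`, `γᵢ ∈ Γ`. -/
def TypeRel (α : Γ →* X ≃ₜ X) (f g : C(X, ℕ)) : Prop :=
  ∃ (n : ℕ) (h : Fin n → C(X, ℕ)) (γ : Fin n → Γ),
    f = ∑ i, h i ∧ g = ∑ i, actC α (γ i) (h i)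

/-- The additive congruence on `C(X, ℕ)` generated by `∼` (since `∼` is itself an
additive congruence, this is just `∼`). -/
def typeCon (α : Γ →* X ≃ₜ X) : AddCon C(X, ℕ) := addConGen (TypeRel α)

/-- The clopen type semigroup `T(α) = C(X,ℕ)/∼`. -/
abbrev TypeSemigroup (α : Γ →* X ≃ₜ X) := (typeCon α).Quotient

/-- The class `[f] ∈ T(α)` of `f ∈ C(X, ℕ)`. -/
def cls (α : Γ →* X ≃ₜ X) (f : C(X, ℕ)) : TypeSemigroup α := (typeCon α).toQuotient f

/-- The algebraic preorder on `T(α)`: `a ≤ b` iff `a + c = b` for some `c`. -/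
def tle (α : Γ →* X ≃ₜ X) (a b : TypeSemigroup α) : Prop := ∃ c, a + c = b

/-- `T(α)` is unperforated: `n • a ≤ n • b` implies `a ≤ b` for all `n ≥ 1`. -/
def IsUnperforated (α : Γ →* X ≃ₜ X) : Prop :=
  ∀ (a b : TypeSemigroup α) (n : ℕ), 1 ≤ n → tle α (n • a) (n • b) → tle α a b

/-- `T(α)` is almost unperforated: `(n+1) • a ≤ n • b` implies `a ≤ b`. -/
def IsAlmostUnperforated (α : Γ →* X ≃ₜ X) : Prop :=
  ∀ (a b : TypeSemigroup α) (n : ℕ), tle α ((n + 1) • a) (n • b) → tle α a b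

/-- `T(α)` is cancellative: `a + b = a + c` implies `b = c`. -/
def IsCancellative (α : Γ →* X ≃ₜ X) : Prop :=
  ∀ a b c : TypeSemigroup α, a + b = a + c → b = c

/-- The algebraic preorder on `T(α)` is a partial order, i.e. it is antisymmetric. -/
def TleAntisymm (α : Γ →* X ≃ₜ X) : Prop :=
  ∀ a b : TypeSemigroup α, tle α a b → tle α b a → a = b

/-- `b` is an order unit of `T(α)`: every `a` satisfies `a ≤ k • b` for some `k ∈ ℕ`. -/
def IsOrderUnit (α : Γ →* X ≃ₜ X) (b : TypeSemigroup α) : Prop :=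
  ∀ a : TypeSemigroup α, ∃ k : ℕ, tle α a (k • b)

/-- A state on `T(α)`: an additive map to `[0,∞]` sending `0` to `0`. -/
def IsState (α : Γ →* X ≃ₜ X) (ν : TypeSemigroup α → ℝ≥0∞) : Prop :=
  ν 0 = 0 ∧ ∀ a b : TypeSemigroup α, ν (a + b) = ν a + ν b

/-- `M(α)`: the set of `Γ`-invariant Radon (regular Borel) probability measures on `X`. -/
def invRadon (α : Γ →* X ≃ₜ X) : Set (@Measure X (borel X)) :=
  letI : MeasurableSpace X := borel X
  {μ : Measure X | IsProbabilityMeasure μ ∧ μ.Regular ∧ ∀ γ : Γ, Measure.map ⇑(α γ) μ = μ}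

/-- The set of `Γ`-invariant Borel probability measures on `X`. -/
def invBorel (α : Γ →* X ≃ₜ X) : Set (@Measure X (borel X)) :=
  letI : MeasurableSpace X := borel X
  {μ : Measure X | IsProbabilityMeasure μ ∧ ∀ γ : Γ, Measure.map ⇑(α γ) μ = μ}

/-- `μ([f]) = ∫ f dμ`, the value of (the state associated with) a measure on the class of
`f ∈ C(X, ℕ)`. -/
noncomputable def intOf {X : Type*} [TopologicalSpace X] (μ : @Measure X (borel X))
    (f : C(X, ℕ)) : ℝ :=
  letI : MeasurableSpace X := borel X
  ∫ x, (f x : ℝ) ∂μ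

/-- `A` is subequidecomposable to `B`: there are a partition `A = A₁ ⊔ ⋯ ⊔ Aₙ` into clopen
sets and `γ₁, …, γₙ ∈ Γ` with `γ₁A₁, …, γₙAₙ` pairwise disjoint and contained in `B`. -/
def Subequidecomposable (α : Γ →* X ≃ₜ X) (A B : Set X) : Prop :=
  ∃ (n : ℕ) (P : Fin n → Set X) (γ : Fin n → Γ),
    (∀ i, IsClopen (P i)) ∧ (Pairwise fun i j => Disjoint (P i) (P j)) ∧
    (⋃ i, P i) = A ∧
    (Pairwise fun i j => Disjoint (⇑(α (γ i)) '' P i) (⇑(α (γ j)) '' P j)) ∧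
    ∀ i, ⇑(α (γ i)) '' P i ⊆ B

/-- Dynamical comparison (with respect to invariant Radon probability measures): for all
clopen `A`, `B` with `B` nonempty and `μ(A) < μ(B)` for every `μ ∈ M(α)`, `A` is
subequidecomposable to `B`. -/
def DynComparison (α : Γ →* X ≃ₜ X) : Prop :=
  ∀ A B : Set X, IsClopen A → IsClopen B → B.Nonempty →
    (∀ μ ∈ invRadon α, μ A < μ B) → Subequidecomposable α A B

/-- Dynamical comparison (with respect to invariant Borel probability measures). -/
def DynComparisonBorel (α : Γ →* X ≃ₜ X) : Prop :=
  ∀ A B : Set X, IsClopen A → IsClopen B → B.Nonempty →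
    (∀ μ ∈ invBorel α, μ A < μ B) → Subequidecomposable α A B

/-- The action `α` is minimal: the only closed invariant subsets are `∅` and `X`. -/
def IsMinimalAction (α : Γ →* X ≃ₜ X) : Prop :=
  ∀ F : Set X, IsClosed F → (∀ γ : Γ, ⇑(α γ) '' F ⊆ F) → F = ∅ ∨ F = Set.univ

/-- Membership in the topological full group `⟦α⟧`: `g` coincides with elements of the
action on the pieces of a finite clopen partition of `X`. -/
def InTopFullGroup (α : Γ →* X ≃ₜ X) (g : X ≃ₜ X) : Prop :=
  ∃ (n : ℕ) (P : Fin n → Set X) (γ : Fin n → Γ),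
    (∀ i, IsClopen (P i)) ∧ (Pairwise fun i j => Disjoint (P i) (P j)) ∧
    (⋃ i, P i) = Set.univ ∧ ∀ i, ∀ x ∈ P i, g x = α (γ i) x

/-- `⟦α⟧` admits a dense locally finite subgroup: there is a subgroup `Λ` of `Homeo(X)`
contained in `⟦α⟧`, locally finite (all its finitely generated subgroups are finite), and
dense in `⟦α⟧` for the topology whose basic neighborhoods of `h` are
`{g : g A = h A for all A ∈ 𝒜}`, `𝒜` ranging over finite clopen partitions of `X`. -/
def HasDenseLocallyFiniteSubgroup (α : Γ →* X ≃ₜ X) : Prop :=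
  ∃ Λ : Subgroup (X ≃ₜ X),
    ((Λ : Set (X ≃ₜ X)) ⊆ {g | InTopFullGroup α g}) ∧
    (∀ s : Finset (X ≃ₜ X), (s : Set (X ≃ₜ X)) ⊆ (Λ : Set (X ≃ₜ X)) →
      ((Subgroup.closure (s : Set (X ≃ₜ X)) : Subgroup (X ≃ₜ X)) : Set (X ≃ₜ X)).Finite) ∧
    ∀ g : X ≃ₜ X, InTopFullGroup α g →
      ∀ (n : ℕ) (P : Fin n → Set X), (∀ i, IsClopen (P i)) →
        (Pairwise fun i j => Disjoint (P i) (P j)) → (⋃ i, P i) = Set.univ →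
        ∃ l ∈ Λ, ∀ i, ⇑l '' P i = ⇑g '' P i

end Defs

/-- The topology on `Homeo(X)` whose basic neighborhoods of `h` are the sets
`{g : g A = h A for all A ∈ 𝒜}`, for `𝒜` a finite clopen partition of `X`; equivalently,
the topology generated by the sets `{g : g '' A = B}` for `A`, `B` clopen. -/
def homeoTop (X : Type*) [TopologicalSpace X] : TopologicalSpace (X ≃ₜ X) :=
  TopologicalSpace.generateFrom
    {U | ∃ A B : Set X, IsClopen A ∧ IsClopen B ∧ U = {g : X ≃ₜ X | ⇑g '' A = B}}

/-- The topology on the space `A(Γ)` of actions of `Γ` on `X`, induced from the product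
topology on `Homeo(X)^Γ`. -/
def actionTop (Γ : Type*) [Group Γ] (X : Type*) [TopologicalSpace X] :
    TopologicalSpace (Γ →* (X ≃ₜ X)) :=
  letI := homeoTop X
  TopologicalSpace.induced (fun φ : Γ →* (X ≃ₜ X) => ⇑φ) Pi.topologicalSpace


/-! By Hall's marriage theorem it suffices to find a nonempty finite `F ⊆ Γ` such that every
right translate `F x` meets `B` at least as often as `A`: double counting then gives
`#S ≤ #(F F⁻¹ S ∩ B)` for finite `S ⊆ A`, and a matching `a ↦ d a` with `d ∈ F F⁻¹` sorts `A`
into finitely many pieces according to `d`.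
If no such `F` exists, pick for each Følner set `T` a bad point `x`; an ultralimit of the
uniform distributions on the sets `T x` is an invariant mean `m` with `m B ≤ m A`.
Følner sets exist because an invariant mean forbids, again by Hall's theorem, a finite `K`
with `2 #S ≤ #(K S)` for all `S`. -/

open scoped Pointwise symmDiff Finset

namespace IsInvFapm

variable {Γ : Type*} [Group Γ] {m : Set Γ → ℝ}

lemma apply_empty (hm : IsInvFapm m) : m ∅ = 0 := by
  have h := hm.2.2.2.1 ∅ ∅ (disjoint_empty _)
  rw [union_empty] at h
  linarith

lemma apply_biUnion_finset (hm : IsInvFapm m) {ι : Type*} {s : Finset ι} {E : ι → Set Γ}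
    (hE : (s : Set ι).PairwiseDisjoint E) : m (⋃ i ∈ s, E i) = ∑ i ∈ s, m (E i) := by
  classical
  induction s using Finset.induction_on with
  | empty => simpa using hm.apply_empty
  | insert a s ha ih =>
    rw [Finset.coe_insert, pairwiseDisjoint_insert] at hE
    have hdisj : Disjoint (E a) (⋃ i ∈ s, E i) :=
      disjoint_iUnion₂_right.2 fun i hi => hE.2 i hi (ne_of_mem_of_not_mem hi ha).symm
    rw [Finset.set_biUnion_insert, hm.2.2.2.1 _ _ hdisj, Finset.sum_insert ha, ih hE.1]

lemma apply_image_mul_self (hm : IsInvFapm m) {κ : Γ → Γ} {K : Finset Γ} (hκ : ∀ x, κ x ∈ K)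
    {E : Set Γ} (hinj : InjOn (fun x => κ x * x) E) : m ((fun x => κ x * x) '' E) = m E := by
  set piece : Γ → Set Γ := fun k => E ∩ κ ⁻¹' {k}
  have hcover : E = ⋃ k ∈ K, piece k := by
    ext x
    simp only [piece, mem_iUnion₂, mem_inter_iff, mem_preimage, mem_singleton_iff]
    exact ⟨fun hx => ⟨κ x, hκ x, hx, rfl⟩, fun ⟨_, _, hx, _⟩ => hx⟩
  have himage : (fun x => κ x * x) '' E = ⋃ k ∈ K, (k * ·) '' piece k := by
    conv_lhs => rw [hcover]
    simp only [image_iUnion₂]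
    refine iUnion₂_congr fun k _ => image_congr fun x hx => ?_
    rw [hx.2]
  have hpieces : (K : Set Γ).PairwiseDisjoint piece :=
    fun k _ k' _ hkk' => disjoint_left.2 fun x hx hx' => hkk' (hx.2.symm.trans hx'.2)
  have htranslates : (K : Set Γ).PairwiseDisjoint fun k => (k * ·) '' piece k := by
    rintro k _ k' _ hkk'
    refine disjoint_left.2 ?_
    rintro _ ⟨x, ⟨hxE, hκx : κ x = k⟩, rfl⟩ ⟨y, ⟨hyE, hκy : κ y = k'⟩, hyx⟩
    have hxy : y = x := hinj hyE hxE (by simp only [hκx, hκy]; exact hyx)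
    exact hkk' (hκx.symm.trans (hxy ▸ hκy))
  rw [himage, hm.apply_biUnion_finset htranslates, hcover, hm.apply_biUnion_finset hpieces]
  exact Finset.sum_congr rfl fun k _ => hm.2.2.2.2 k (piece k)

end IsInvFapm

section Combinatorics

variable {Γ : Type*} [Group Γ] [DecidableEq Γ]

lemma exists_injective_mul_of_hall {ι : Type*} (D : Finset Γ) (p : ι → Γ) (B : Set Γ)
    [DecidablePred (· ∈ B)] (hall : ∀ s : Finset ι, #s ≤ #{y ∈ D * s.image p | y ∈ B}) :
    ∃ κ : ι → Γ, (∀ i, κ i ∈ D ∧ κ i * p i ∈ B) ∧ Function.Injective fun i => κ i * p i := by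
  set t : ι → Finset Γ := fun i => {y ∈ D.image (· * p i) | y ∈ B}
  have hall' : ∀ s : Finset ι, #s ≤ #(s.biUnion t) := by
    refine fun s => (hall s).trans (Finset.card_le_card fun y hy => ?_)
    obtain ⟨hy, hyB⟩ := Finset.mem_filter.1 hy
    obtain ⟨d, hd, _, hx, rfl⟩ := Finset.mem_mul.1 hy
    obtain ⟨i, hi, rfl⟩ := Finset.mem_image.1 hx
    exact Finset.mem_biUnion.2 ⟨i, hi, Finset.mem_filter.2 ⟨Finset.mem_image_of_mem _ hd, hyB⟩⟩
  obtain ⟨φ, hφ, hφt⟩ := (Finset.all_card_le_biUnion_card_iff_exists_injective t).1 hall'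
  have hκ : ∀ i, ∃ d ∈ D, d * p i = φ i := fun i =>
    Finset.mem_image.1 (Finset.mem_filter.1 (hφt i)).1
  choose κ hκD hκφ using hκ
  refine ⟨κ, fun i => ⟨hκD i, ?_⟩, ?_⟩
  · rw [hκφ]
    exact (Finset.mem_filter.1 (hφt i)).2
  · simpa only [hκφ] using hφ

lemma card_le_card_filter_mul_inv_mul {F : Finset Γ} (hF : F.Nonempty) {A B : Set Γ}
    [DecidablePred (· ∈ A)] [DecidablePred (· ∈ B)]
    (hAB : ∀ x, #{f ∈ F | f * x ∈ A} ≤ #{f ∈ F | f * x ∈ B}) {S : Finset Γ} (hS : ↑S ⊆ A) :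
    #S ≤ #{y ∈ F * F⁻¹ * S | y ∈ B} := by
  set Y := F⁻¹ * S
  have hA : ∀ f ∈ F, #S ≤ #{y ∈ Y | f * y ∈ A} := by
    intro f hf
    rw [← Finset.card_smul_finset f⁻¹ S]
    refine Finset.card_le_card fun y hy => ?_
    obtain ⟨s, hs, rfl⟩ := Finset.mem_smul_finset.1 hy
    refine Finset.mem_filter.2 ⟨Finset.mul_mem_mul (Finset.inv_mem_inv hf) hs, ?_⟩
    simpa [smul_eq_mul] using hS hs
  have hB : ∀ f ∈ F, #{y ∈ Y | f * y ∈ B} ≤ #{y ∈ F * F⁻¹ * S | y ∈ B} := by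
    intro f hf
    refine Finset.card_le_card_of_injOn (f * ·) (fun y hy => ?_) (mul_right_injective f).injOn
    obtain ⟨hyY, hyB⟩ := Finset.mem_filter.1 hy
    rw [mul_assoc]
    exact Finset.mem_filter.2 ⟨Finset.mul_mem_mul hf hyY, hyB⟩
  have hswap : ∀ C : Set Γ, [DecidablePred (· ∈ C)] →
      ∑ f ∈ F, #{y ∈ Y | f * y ∈ C} = ∑ y ∈ Y, #{f ∈ F | f * y ∈ C} := by
    intro C _
    simp only [Finset.card_filter]
    exact Finset.sum_comm
  have hcount : #F * #S ≤ #F * #{y ∈ F * F⁻¹ * S | y ∈ B} := by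
    calc #F * #S ≤ ∑ f ∈ F, #{y ∈ Y | f * y ∈ A} := by
          simpa using Finset.card_nsmul_le_sum F _ _ hA
      _ = ∑ y ∈ Y, #{f ∈ F | f * y ∈ A} := hswap A
      _ ≤ ∑ y ∈ Y, #{f ∈ F | f * y ∈ B} := Finset.sum_le_sum fun y _ => hAB y
      _ = ∑ f ∈ F, #{y ∈ Y | f * y ∈ B} := (hswap B).symm
      _ ≤ #F * #{y ∈ F * F⁻¹ * S | y ∈ B} := by
          simpa using Finset.sum_le_card_nsmul F _ _ hB
  exact Nat.le_of_mul_le_mul_left hcount (Finset.card_pos.2 hF)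

lemma pow_mul_card_le_card_pow_mul {K : Finset Γ} {c : ℝ} (hc : 0 ≤ c)
    (hK : ∀ S : Finset Γ, c * #S ≤ #(K * S)) (M : ℕ) (S : Finset Γ) :
    c ^ M * #S ≤ #(K ^ M * S) := by
  induction M generalizing S with
  | zero => simp
  | succ M ih =>
    calc c ^ (M + 1) * #S = c ^ M * (c * #S) := by ring
      _ ≤ c ^ M * #(K * S) := by gcongr; exact hK S
      _ ≤ #(K ^ M * (K * S)) := ih _
      _ = #(K ^ (M + 1) * S) := by rw [pow_succ, mul_assoc]

lemma card_smul_mul_singleton_symmDiff (γ x : Γ) (T : Finset Γ) :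
    #((γ • (T * {x})) ∆ (T * {x})) = #((γ • T) ∆ T) := by
  rw [← smul_mul_assoc, Finset.mul_singleton, Finset.mul_singleton,
    ← Finset.smul_finset_symmDiff, Finset.card_smul_finset]

end Combinatorics

namespace IsInvFapm

variable {Γ : Type*} [Group Γ] [DecidableEq Γ] {m : Set Γ → ℝ}

/-- Otherwise Hall's theorem would place two disjoint piecewise-translated copies of `Γ`
inside `Γ`, and `m` would give them total mass `2`. -/
lemma not_forall_two_mul_card_le (hm : IsInvFapm m) (K : Finset Γ) :
    ¬ ∀ S : Finset Γ, 2 * #S ≤ #(K * S) := by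
  intro hK
  obtain ⟨κ, hκ, hinj⟩ := exists_injective_mul_of_hall K (Prod.fst : Γ × Fin 2 → Γ) univ
    fun s => by
      have hs : s ⊆ s.image Prod.fst ×ˢ Finset.univ := fun p hp =>
        Finset.mem_product.2 ⟨Finset.mem_image_of_mem _ hp, Finset.mem_univ _⟩
      calc #s ≤ 2 * #(s.image Prod.fst) := by
            simpa [mul_comm] using Finset.card_le_card hs
        _ ≤ #(K * s.image Prod.fst) := hK _
        _ = _ := by simp
  set g : Fin 2 → Γ → Γ := fun i x => κ (x, i) * x
  have hg : ∀ i, m (range (g i)) = 1 := fun i => by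
    rw [← image_univ, hm.apply_image_mul_self (fun x => (hκ (x, i)).1)
      (fun x _ y _ h => congrArg Prod.fst (hinj h)), hm.2.2.1]
  have hdisj : Disjoint (range (g 0)) (range (g 1)) := by
    rw [disjoint_left]
    rintro _ ⟨x, rfl⟩ ⟨y, hy⟩
    exact zero_ne_one (congrArg Prod.snd (hinj hy)).symm
  have h := hm.2.1 (range (g 0) ∪ range (g 1))
  rw [hm.2.2.2.1 _ _ hdisj, hg, hg] at h
  norm_num at h

lemma exists_card_mul_le (hm : IsInvFapm m) (K : Finset Γ) {ε : ℝ} (hε : 0 < ε) :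
    ∃ T : Finset Γ, T.Nonempty ∧ (#(K * T) : ℝ) ≤ (1 + ε) * #T := by
  by_contra! h
  have hK : ∀ S : Finset Γ, (1 + ε) * #S ≤ #(K * S) := fun S => by
    rcases S.eq_empty_or_nonempty with rfl | hS
    · simp
    · exact (h S hS).le
  obtain ⟨M, hM⟩ := pow_unbounded_of_one_lt (2 : ℝ) (lt_add_of_pos_right 1 hε)
  refine hm.not_forall_two_mul_card_le (K ^ M) fun S => ?_
  have h2 : (2 : ℝ) * #S ≤ #(K ^ M * S) :=
    (mul_le_mul_of_nonneg_right hM.le (Nat.cast_nonneg _)).trans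
      (pow_mul_card_le_card_pow_mul (by positivity) hK M S)
  exact_mod_cast h2

lemma exists_card_smul_symmDiff_le (hm : IsInvFapm m) (K : Finset Γ) {ε : ℝ} (hε : 0 < ε) :
    ∃ T : Finset Γ, T.Nonempty ∧ ∀ γ ∈ K, (#((γ • T) ∆ T) : ℝ) ≤ ε * #T := by
  set K' := insert 1 K
  obtain ⟨T, hT, hKT⟩ := hm.exists_card_mul_le K' (half_pos hε)
  refine ⟨T, hT, fun γ hγ => ?_⟩
  have hT_sub : T ⊆ K' * T := Finset.subset_mul_right T (Finset.mem_insert_self 1 K)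
  have hγT_sub : γ • T ⊆ K' * T := Finset.smul_finset_subset_mul (Finset.mem_insert_of_mem hγ)
  have hsdiff : #(γ • T \ T) ≤ #((K' * T) \ T) :=
    Finset.card_le_card (Finset.sdiff_subset_sdiff hγT_sub le_rfl)
  have hsplit := Finset.card_sdiff_add_card_eq_card hT_sub
  have hsymm : #((γ • T) ∆ T) ≤ 2 * #(γ • T \ T) := by
    calc #((γ • T) ∆ T) ≤ #(γ • T \ T) + #(T \ γ • T) := Finset.card_union_le _ _
      _ = 2 * #(γ • T \ T) := by rw [Finset.card_sdiff_comm (Finset.card_smul_finset γ T)]; ring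
  have hsdiff' : (#(γ • T \ T) : ℝ) ≤ #((K' * T) \ T) := by exact_mod_cast hsdiff
  have hsplit' : (#((K' * T) \ T) : ℝ) + #T = #(K' * T) := by exact_mod_cast hsplit
  have hsymm' : (#((γ • T) ∆ T) : ℝ) ≤ 2 * #(γ • T \ T) := by exact_mod_cast hsymm
  linarith

end IsInvFapm

instance MeasureTheory.Measure.count.instSMulInvariantMeasure {G X : Type*} [Group G]
    [MulAction G X] [MeasurableSpace X] [MeasurableSingletonClass X] :
    SMulInvariantMeasure G X Measure.count :=
  ⟨fun c s _ => by
    rw [preimage_smul, ← image_smul, Measure.count_injective_image (MulAction.injective c⁻¹)]⟩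

section Foelner

open Filter Topology

variable {Γ : Type*} [Group Γ] [MeasurableSpace Γ]

lemma MeasureTheory.Measure.count_inter_mul_singleton [MeasurableSingletonClass Γ]
    [DecidableEq Γ] (E : Set Γ) [DecidablePred (· ∈ E)] (T : Finset Γ) (x : Γ) :
    Measure.count (E ∩ ↑(T * {x})) = #{t ∈ T | t * x ∈ E} := by
  have h : E ∩ ↑(T * {x}) = ↑({t ∈ T | t * x ∈ E} * {x}) := by
    ext
    aesop
  rw [h, Measure.count_apply_finset, Finset.card_mul_singleton]

lemma isFoelner_count_mul_singleton [MeasurableSingletonClass Γ] [DecidableEq Γ] {ι : Type*}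
    {l : Filter ι} {T : ι → Finset Γ} (hT : ∀ i, (T i).Nonempty) (x : ι → Γ)
    (hfol : ∀ γ : Γ, Tendsto (fun i => (#((γ • T i) ∆ T i) : ℝ≥0∞) / #(T i)) l (𝓝 0)) :
    IsFoelner Γ Measure.count l fun i => (↑(T i * {x i}) : Set Γ) where
  eventually_measurableSet := Eventually.of_forall fun _ => Finset.measurableSet _
  eventually_meas_ne_zero := Eventually.of_forall fun i =>
    Measure.count_ne_zero_iff.2 (Finset.coe_nonempty.2 ((hT i).mul (Finset.singleton_nonempty _)))
  eventually_meas_ne_top := Eventually.of_forall fun i => by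
    rw [Measure.count_apply_finset]
    exact ENNReal.natCast_ne_top _
  tendsto_meas_smul_symmDiff γ := by
    simpa only [← Finset.coe_smul_finset, ← Finset.coe_symmDiff, Measure.count_apply_finset,
      card_smul_mul_singleton_symmDiff, Finset.card_mul_singleton] using hfol γ

lemma IsFoelner.mean_le_one {G X : Type*} [Group G] [MulAction G X] [MeasurableSpace X]
    {μ : Measure X} {ι : Type*} {U : Ultrafilter ι} {F : ι → Set X} (hF : IsFoelner G μ U F)
    (E : Set X) : IsFoelner.mean μ U F E ≤ 1 :=
  le_of_tendsto' (hF.tendsto_nhds_mean E) fun _ =>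
    ENNReal.div_le_of_le_mul (by rw [one_mul]; exact measure_mono inter_subset_right)

lemma IsFoelner.isInvFapm_toReal_mean [DiscreteMeasurableSpace Γ] {ι : Type*}
    {U : Ultrafilter ι} {F : ι → Set Γ} (hF : IsFoelner Γ Measure.count U F) :
    IsInvFapm fun E => (IsFoelner.mean Measure.count U F E).toReal := by
  have hne : ∀ E, IsFoelner.mean Measure.count U F E ≠ ∞ := fun E =>
    ((hF.mean_le_one E).trans_lt ENNReal.one_lt_top).ne
  refine ⟨fun E => ENNReal.toReal_nonneg, fun E => ?_, ?_, fun E E' h => ?_, fun γ E => ?_⟩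
  · simpa using ENNReal.toReal_mono ENNReal.one_ne_top (hF.mean_le_one E)
  · simp [hF.mean_univ_eq_one]
  · dsimp only
    rw [hF.mean_union_eq_add_of_disjoint E E' MeasurableSet.of_discrete h,
      ENNReal.toReal_add (hne E) (hne E')]
  · exact congrArg ENNReal.toReal (hF.mean_smul_eq_mean γ E)

end Foelner

section Comparison

open Filter Topology

variable {Γ : Type*} [Group Γ] [DecidableEq Γ]

lemma exists_finset_forall_card_filter_le (hamen : ∃ m : Set Γ → ℝ, IsInvFapm m) {A B : Set Γ}
    [DecidablePred (· ∈ A)] [DecidablePred (· ∈ B)]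
    (hAB : ∀ m : Set Γ → ℝ, IsInvFapm m → m A < m B) :
    ∃ F : Finset Γ, F.Nonempty ∧ ∀ x, #{f ∈ F | f * x ∈ A} ≤ #{f ∈ F | f * x ∈ B} := by
  obtain ⟨m, hm⟩ := hamen
  by_contra! hbad
  let _ : MeasurableSpace Γ := ⊤
  have hfol : ∀ p : Finset Γ × ℕ, ∃ T : Finset Γ, T.Nonempty ∧
      ∀ γ ∈ p.1, (#((γ • T) ∆ T) : ℝ) ≤ 1 / (p.2 + 1) * #T :=
    fun p => hm.exists_card_smul_symmDiff_le p.1 Nat.one_div_pos_of_nat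
  choose T hT hTfol using hfol
  choose x hx using fun p => hbad (T p) (hT p)
  set l : Filter (Finset Γ × ℕ) := atTop ×ˢ atTop
  have hF : IsFoelner Γ Measure.count l fun p => (↑(T p * {x p}) : Set Γ) := by
    refine isFoelner_count_mul_singleton hT x fun γ => ?_
    have hbound : Tendsto (fun p : Finset Γ × ℕ => ENNReal.ofReal (1 / (p.2 + 1))) l (𝓝 0) := by
      simpa using ENNReal.tendsto_ofReal (tendsto_one_div_add_atTop_nhds_zero_nat.comp tendsto_snd)
    refine tendsto_of_tendsto_of_tendsto_of_le_of_le' tendsto_const_nhds hbound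
      (Eventually.of_forall fun _ => zero_le) ?_
    filter_upwards [(eventually_ge_atTop {γ}).prod_inl atTop] with p hp
    refine ENNReal.div_le_of_le_mul ?_
    rw [← ENNReal.ofReal_natCast, ← ENNReal.ofReal_natCast, ← ENNReal.ofReal_mul (by positivity)]
    exact ENNReal.ofReal_le_ofReal (hTfol p γ (Finset.singleton_subset_iff.1 hp))
  have hU := hF.mono (Ultrafilter.of_le l)
  have hBA : IsFoelner.mean Measure.count (Ultrafilter.of l) _ B ≤
      IsFoelner.mean Measure.count (Ultrafilter.of l) _ A :=
    le_of_tendsto_of_tendsto' (hU.tendsto_nhds_mean B) (hU.tendsto_nhds_mean A) fun p => by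
      rw [Measure.count_inter_mul_singleton, Measure.count_inter_mul_singleton]
      exact ENNReal.div_le_div_right (by exact_mod_cast (hx p).le) _
  exact (hAB _ hU.isInvFapm_toReal_mean).not_ge
    (ENNReal.toReal_mono ((hU.mean_le_one A).trans_lt ENNReal.one_lt_top).ne hBA)

end Comparison

lemma exists_fin_partition_of_injective {Γ : Type*} [Group Γ] {A B : Set Γ} {D : Finset Γ}
    (hD : D.Nonempty) {κ : A → Γ} (hκ : ∀ a, κ a ∈ D ∧ κ a * a ∈ B)
    (hinj : Function.Injective fun a => κ a * a) :
    ∃ (n : ℕ) (P : Fin n → Set Γ) (γ : Fin n → Γ),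
      1 ≤ n ∧
      (Pairwise fun i j => Disjoint (P i) (P j)) ∧
      (⋃ i, P i) = A ∧
      (Pairwise fun i j => Disjoint ((γ i * ·) '' P i) ((γ j * ·) '' P j)) ∧
      ∀ i, (γ i * ·) '' P i ⊆ B := by
  set e := D.equivFin
  refine ⟨#D, fun i => Subtype.val '' (κ ⁻¹' {(e.symm i : Γ)}), fun i => e.symm i,
    Finset.card_pos.2 hD, fun i j hij => ?_, ?_, fun i j hij => ?_, fun i => ?_⟩
  · refine disjoint_left.2 ?_
    rintro _ ⟨a, ha : κ a = _, rfl⟩ ⟨b, hb : κ b = _, hba⟩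
    obtain rfl := Subtype.ext hba
    exact hij (e.symm.injective (Subtype.ext (ha.symm.trans hb)))
  · ext x
    simp only [mem_iUnion]
    constructor
    · rintro ⟨i, a, -, rfl⟩
      exact a.2
    · intro hx
      exact ⟨e ⟨κ ⟨x, hx⟩, (hκ _).1⟩, ⟨x, hx⟩, by simp, rfl⟩
  · refine disjoint_left.2 ?_
    rintro _ ⟨_, ⟨a, ha : κ a = _, rfl⟩, rfl⟩ ⟨_, ⟨b, hb : κ b = _, rfl⟩, hba⟩
    obtain rfl : b = a := hinj (by simp only [ha, hb]; exact hba)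
    exact hij (e.symm.injective (Subtype.ext (ha.symm.trans hb)))
  · rintro _ ⟨_, ⟨a, ha : κ a = _, rfl⟩, rfl⟩
    simpa only [ha] using (hκ a).2

theorem stmt0_general {Γ : Type*} [Group Γ]
    (hamen : ∃ m : Set Γ → ℝ, IsInvFapm m)
    (A B : Set Γ)
    (hAB : ∀ m : Set Γ → ℝ, IsInvFapm m → m A < m B) :
    ∃ (n : ℕ) (P : Fin n → Set Γ) (γ : Fin n → Γ),
      1 ≤ n ∧
      (Pairwise fun i j => Disjoint (P i) (P j)) ∧
      (⋃ i, P i) = A ∧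
      (Pairwise fun i j => Disjoint ((γ i * ·) '' P i) ((γ j * ·) '' P j)) ∧
      ∀ i, (γ i * ·) '' P i ⊆ B := by
  classical
  obtain ⟨F, hF, hFAB⟩ := exists_finset_forall_card_filter_le hamen hAB
  obtain ⟨κ, hκ, hinj⟩ := exists_injective_mul_of_hall (F * F⁻¹) ((↑) : A → Γ) B fun s => by
    have hsA : (↑(s.image Subtype.val) : Set Γ) ⊆ A := by simp
    simpa [Finset.card_image_of_injective _ Subtype.val_injective] using
      card_le_card_filter_mul_inv_mul hF hFAB hsA
  exact exists_fin_partition_of_injective (hF.mul hF.inv) hκ hinj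

/-- Let `Γ` be a countable amenable group and `A, B ⊆ Γ` be such that
`m(A) < m(B)` for every `Γ`-invariant finitely additive probability measure `m` on `Γ`.
Then there are `n ≥ 1`, a partition `A = A₁ ⊔ ⋯ ⊔ Aₙ` and `γ₁, …, γₙ ∈ Γ` such that
`γ₁A₁, …, γₙAₙ` are pairwise disjoint and contained in `B`. -/
theorem stmt0 {Γ : Type*} [Group Γ] [Countable Γ]
    (hamen : ∃ m : Set Γ → ℝ, IsInvFapm m)
    (A B : Set Γ)
    (hAB : ∀ m : Set Γ → ℝ, IsInvFapm m → m A < m B) :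
    ∃ (n : ℕ) (P : Fin n → Set Γ) (γ : Fin n → Γ),
      1 ≤ n ∧
      (Pairwise fun i j => Disjoint (P i) (P j)) ∧
      (⋃ i, P i) = A ∧
      (Pairwise fun i j => Disjoint ((γ i * ·) '' P i) ((γ j * ·) '' P j)) ∧
      ∀ i, (γ i * ·) '' P i ⊆ B :=
  stmt0_general hamen A B hAB
end

section
/- Let α be an action of a countable group Γ by homeomorphisms on a nonempty compact Hausdorff 0-dimensional space X such that M(α) = ∅. Then α has dynamical comparison if and only if α is minimal and a ≤ b for all nonzero a, b ∈ T(α). -/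
open MeasureTheory Set
open scoped ENNReal

/-!
When `M(α) = ∅`, dynamical comparison says that every clopen set is subequidecomposable to
every nonempty clopen set. Using Riesz refinement in `C(X, ℕ)` (which makes `∼` transitive),
`A` is subequidecomposable to `B` exactly when `[1_A] ≤ [1_B]` in `T(α)`; this gives the
converse direction at once. For the direct one, splitting `X = U ⊔ Uᶜ` gives
`2 [1_X] ≤ [1_U] + [1_Uᶜ] = [1_X]`, so every class, being at most `n [1_X]` by compactness, lies
below `[1_X] ≤ [1_{supp g}] ≤ [g]`; minimality holds since `X` is sent into any nonempty
clopen set. A one-point space is excluded because its Dirac measure is invariant.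
-/

open Function

namespace ContinuousMap

variable {X : Type*} [TopologicalSpace X]

lemma isClopen_support_nat (f : C(X, ℕ)) : IsClopen (support f) :=
  (isClopen_discrete {0}ᶜ).preimage f.continuous

lemma support_sum_nat {ι : Type*} [Fintype ι] (f : ι → C(X, ℕ)) :
    support ⇑(∑ i, f i) = ⋃ i, support (f i) := by
  ext x
  simp [Finset.sum_eq_zero_iff]

lemma support_mono_nat {f g : C(X, ℕ)} (h : f ≤ g) : support f ⊆ support g :=
  fun x hx => (Nat.pos_of_ne_zero hx).trans_le (h x) |>.ne'

lemma pairwise_disjoint_support_of_sum_le_one {ι : Type*} [Fintype ι] {f : ι → C(X, ℕ)}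
    (h : ∀ x, ∑ i, f i x ≤ 1) :
    Pairwise fun i j => Disjoint (support (f i)) (support (f j)) := by
  intro i j hij
  refine Set.disjoint_left.2 fun x hi hj => hij ?_
  exact (Finset.sum_le_one_iff.1 (h x) i j (Finset.mem_univ _) (Finset.mem_univ _) hi hj).1

lemma sum_eq_zero_iff_nat {ι : Type*} {s : Finset ι} {f : ι → C(X, ℕ)} :
    ∑ i ∈ s, f i = 0 ↔ ∀ i ∈ s, f i = 0 :=
  Finset.sum_eq_zero_iff_of_nonneg fun i _ x => Nat.zero_le (f i x)

lemma exists_le_nsmul_one [CompactSpace X] (f : C(X, ℕ)) : ∃ N : ℕ, f ≤ N • 1 := by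
  obtain ⟨N, hN⟩ := (isCompact_range f.continuous).bddAbove
  exact ⟨N, fun x => by simpa using hN (Set.mem_range_self x)⟩

theorem exists_eq_sum_of_le_sum {n : ℕ} {a : C(X, ℕ)} {b : Fin n → C(X, ℕ)}
    (h : a ≤ ∑ i, b i) : ∃ c : Fin n → C(X, ℕ), (∀ i, c i ≤ b i) ∧ a = ∑ i, c i := by
  induction n generalizing a with
  | zero =>
    refine ⟨finZeroElim, finZeroElim, ext fun x => ?_⟩
    simpa using le_def.1 h x
  | succ n ih =>
    have hrest : a - a ⊓ b 0 ≤ ∑ i : Fin n, b i.succ := le_def.2 fun x => by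
      have := le_def.1 h x
      simp only [Fin.sum_univ_succ, add_apply, sum_apply, sub_apply, inf_apply] at this ⊢
      omega
    obtain ⟨c, hcb, hc⟩ := ih hrest
    refine ⟨Fin.cons (a ⊓ b 0) c, Fin.cases inf_le_right hcb, ext fun x => ?_⟩
    have := congrArg (· x) hc
    simp only [Fin.sum_univ_succ, Fin.cons_zero, Fin.cons_succ, add_apply, sum_apply,
      sub_apply, inf_apply] at this ⊢
    omega

theorem exists_refinement_of_sum_eq {m n : ℕ} {a : Fin m → C(X, ℕ)} {b : Fin n → C(X, ℕ)}
    (h : ∑ i, a i = ∑ j, b j) :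
    ∃ c : Fin m → Fin n → C(X, ℕ), (∀ i, a i = ∑ j, c i j) ∧ ∀ j, b j = ∑ i, c i j := by
  induction m generalizing b with
  | zero =>
    rw [Finset.univ_eq_empty, Finset.sum_empty, eq_comm, sum_eq_zero_iff_nat] at h
    exact ⟨finZeroElim, finZeroElim, fun j => by simp [h j]⟩
  | succ m ih =>
    rw [Fin.sum_univ_succ] at h
    obtain ⟨c₀, hc₀b, hc₀⟩ := exists_eq_sum_of_le_sum (b := b) (h ▸ le_add_of_nonneg_right
      fun x => Nat.zero_le _)
    have hrest : ∑ i : Fin m, a i.succ = ∑ j, (b j - c₀ j) := ext fun x => by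
      have h₁ := congrArg (· x) h
      have h₂ := congrArg (· x) hc₀
      simp only [add_apply, sum_apply, sub_apply] at h₁ h₂ ⊢
      have h₃ : ∑ j, (b j x - c₀ j x) + ∑ j, c₀ j x = ∑ j, b j x := by
        rw [← Finset.sum_add_distrib]
        exact Finset.sum_congr rfl fun j _ => Nat.sub_add_cancel (le_def.1 (hc₀b j) x)
      omega
    obtain ⟨c, hca, hcb⟩ := ih hrest
    refine ⟨Fin.cons c₀ c, Fin.cases hc₀ hca, fun j => ext fun x => ?_⟩
    have := congrArg (· x) (hcb j)
    simp only [Fin.sum_univ_succ, Fin.cons_zero, Fin.cons_succ, add_apply, sum_apply,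
      sub_apply] at this ⊢
    have := le_def.1 (hc₀b j) x
    omega

end ContinuousMap

section ClopenIndicator

variable {X : Type*} [TopologicalSpace X]

noncomputable def clopenIndicator {A : Set X} (hA : IsClopen A) : C(X, ℕ) :=
  ⟨A.indicator 1, hA.continuous_indicator continuous_const⟩

@[simp] lemma coe_clopenIndicator {A : Set X} (hA : IsClopen A) :
    ⇑(clopenIndicator hA) = A.indicator 1 := rfl

lemma support_clopenIndicator {A : Set X} (hA : IsClopen A) :
    support (clopenIndicator hA) = A := by
  ext x
  by_cases hx : x ∈ A <;> simp [hx]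

lemma clopenIndicator_le_one {A : Set X} (hA : IsClopen A) (x : X) :
    clopenIndicator hA x ≤ 1 := by
  by_cases hx : x ∈ A <;> simp [hx]

lemma clopenIndicator_univ : clopenIndicator (isClopen_univ (X := X)) = 1 :=
  ContinuousMap.ext fun _ => by simp

lemma clopenIndicator_add_compl {A : Set X} (hA : IsClopen A) :
    clopenIndicator hA + clopenIndicator hA.compl = 1 :=
  ContinuousMap.ext fun x => congrFun (Set.indicator_self_add_compl A 1) x

lemma clopenIndicator_iUnion {n : ℕ} {P : Fin n → Set X} (hP : ∀ i, IsClopen (P i))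
    (hdisj : Pairwise fun i j => Disjoint (P i) (P j)) (hU : IsClopen (⋃ i, P i)) :
    clopenIndicator hU = ∑ i, clopenIndicator (hP i) := by
  ext x
  have := Finset.indicator_biUnion_apply Finset.univ P (f := (1 : X → ℕ))
    (fun i _ j _ hij => hdisj hij) x
  simpa using this

lemma clopenIndicator_le_clopenIndicator {A B : Set X} (hA : IsClopen A) (hB : IsClopen B)
    (h : A ⊆ B) : clopenIndicator hA ≤ clopenIndicator hB :=
  fun x => Set.indicator_le_indicator_of_subset h (fun _ => Nat.zero_le _) x

lemma clopenIndicator_support_le (f : C(X, ℕ)) : clopenIndicator f.isClopen_support_nat ≤ f :=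
  fun x => by
    by_cases hx : f x = 0 <;> simp [hx, Nat.one_le_iff_ne_zero]

end ClopenIndicator

section TypeSemigroup

variable {Γ : Type*} [Group Γ] {X : Type*} [TopologicalSpace X] {α : Γ →* X ≃ₜ X}

lemma actC_apply (γ : Γ) (f : C(X, ℕ)) (x : X) : actC α γ f x = f ((α γ).symm x) := by
  rw [actC, ContinuousMap.comp_apply, map_inv]
  rfl

lemma actC_one (f : C(X, ℕ)) : actC α 1 f = f := by
  ext x
  rw [actC_apply, map_one]
  rfl

lemma actC_mul (γ δ : Γ) (f : C(X, ℕ)) : actC α γ (actC α δ f) = actC α (γ * δ) f := by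
  ext x
  simp only [actC_apply, map_mul]
  rfl

lemma actC_sum {ι : Type*} (γ : Γ) (s : Finset ι) (f : ι → C(X, ℕ)) :
    actC α γ (∑ i ∈ s, f i) = ∑ i ∈ s, actC α γ (f i) := by
  ext x
  simp [actC_apply]

lemma support_actC (γ : Γ) (f : C(X, ℕ)) : support (actC α γ f) = α γ '' support f := by
  ext x
  simp [actC_apply, (α γ).image_eq_preimage_symm]

lemma actC_clopenIndicator (γ : Γ) {A : Set X} (hA : IsClopen A) :
    actC α γ (clopenIndicator hA) = clopenIndicator (hA.preimage (α γ).symm.continuous) := by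
  ext x
  rw [actC_apply]
  exact (Set.indicator_comp_right (g := (1 : X → ℕ)) _).symm

namespace TypeRel

lemma refl (f : C(X, ℕ)) : TypeRel α f f :=
  ⟨1, fun _ => f, fun _ => 1, by simp, by simp [actC_one]⟩

lemma symm {f g : C(X, ℕ)} (h : TypeRel α f g) : TypeRel α g f := by
  obtain ⟨n, k, γ, rfl, rfl⟩ := h
  refine ⟨n, fun i => actC α (γ i) (k i), fun i => (γ i)⁻¹, rfl, ?_⟩
  simp [actC_mul, actC_one]

lemma add {f g f' g' : C(X, ℕ)} (h : TypeRel α f g) (h' : TypeRel α f' g') :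
    TypeRel α (f + f') (g + g') := by
  obtain ⟨m, k, γ, rfl, rfl⟩ := h
  obtain ⟨n, k', γ', rfl, rfl⟩ := h'
  exact ⟨m + n, Fin.append k k', Fin.append γ γ', by simp [Fin.sum_univ_add],
    by simp [Fin.sum_univ_add]⟩

/-- Refine the two decompositions of the middle function into a common one. -/
lemma trans {f g k : C(X, ℕ)} (h : TypeRel α f g) (h' : TypeRel α g k) : TypeRel α f k := by
  obtain ⟨m, u, γ, rfl, hg⟩ := h
  obtain ⟨n, v, δ, hg', rfl⟩ := h'
  obtain ⟨c, hcu, hcv⟩ := ContinuousMap.exists_refinement_of_sum_eq (hg.symm.trans hg')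
  let e := finProdFinEquiv (m := m) (n := n)
  refine ⟨m * n, fun t => actC α (γ (e.symm t).1)⁻¹ (c (e.symm t).1 (e.symm t).2),
    fun t => δ (e.symm t).2 * γ (e.symm t).1, ?_, ?_⟩
  · rw [e.symm.sum_comp (fun p => actC α (γ p.1)⁻¹ (c p.1 p.2)), Fintype.sum_prod_type]
    refine Finset.sum_congr rfl fun i _ => ?_
    dsimp only
    rw [← actC_sum, ← hcu, actC_mul, inv_mul_cancel, actC_one]
  · rw [e.symm.sum_comp (fun p => actC α (δ p.2 * γ p.1) (actC α (γ p.1)⁻¹ (c p.1 p.2))),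
      Fintype.sum_prod_type_right]
    refine Finset.sum_congr rfl fun j _ => ?_
    simp only [actC_mul, mul_inv_cancel_right, hcv j, actC_sum]

end TypeRel

variable (α)

def typeAddCon : AddCon C(X, ℕ) where
  r := TypeRel α
  iseqv := ⟨TypeRel.refl, TypeRel.symm, TypeRel.trans⟩
  add' := TypeRel.add

lemma typeCon_eq_typeAddCon : typeCon α = typeAddCon α :=
  AddCon.addConGen_of_addCon (typeAddCon α)

lemma cls_surjective : Surjective (cls α) :=
  fun a => AddCon.induction_on a fun f => ⟨f, rfl⟩

variable {α}

lemma cls_eq_cls_iff {f g : C(X, ℕ)} : cls α f = cls α g ↔ TypeRel α f g := by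
  rw [cls, cls, AddCon.eq, typeCon_eq_typeAddCon]
  rfl

lemma cls_add (f g : C(X, ℕ)) : cls α (f + g) = cls α f + cls α g := rfl

lemma cls_zero : cls α 0 = 0 := rfl

lemma cls_nsmul (n : ℕ) (f : C(X, ℕ)) : cls α (n • f) = n • cls α f := rfl

lemma cls_eq_zero_iff {f : C(X, ℕ)} : cls α f = 0 ↔ f = 0 := by
  refine ⟨fun h => ?_, fun h => h ▸ cls_zero⟩
  obtain ⟨n, k, γ, hk, rfl⟩ := (cls_eq_cls_iff.1 (h.trans cls_zero.symm)).symm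
  rw [eq_comm, ContinuousMap.sum_eq_zero_iff_nat] at hk
  exact Finset.sum_eq_zero fun i hi => by rw [hk i hi, actC, ContinuousMap.zero_comp]

lemma tle_zero_left (b : TypeSemigroup α) : tle α 0 b := ⟨b, zero_add b⟩

lemma tle_trans {a b c : TypeSemigroup α} (h : tle α a b) (h' : tle α b c) : tle α a c := by
  obtain ⟨d, rfl⟩ := h
  obtain ⟨e, rfl⟩ := h'
  exact ⟨d + e, (add_assoc a d e).symm⟩

lemma tle_add {a b c d : TypeSemigroup α} (h : tle α a b) (h' : tle α c d) :
    tle α (a + c) (b + d) := by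
  obtain ⟨e, rfl⟩ := h
  obtain ⟨e', rfl⟩ := h'
  exact ⟨e + e', add_add_add_comm a c e e'⟩

lemma nsmul_tle_of_add_self_tle {a : TypeSemigroup α} (h : tle α (a + a) a) (n : ℕ) :
    tle α (n • a) a := by
  induction n with
  | zero => exact zero_nsmul a ▸ tle_zero_left a
  | succ n ih => exact tle_trans (succ_nsmul a n ▸ tle_add ih ⟨0, add_zero a⟩) h

lemma tle_cls_of_le {f g : C(X, ℕ)} (h : f ≤ g) : tle α (cls α f) (cls α g) :=
  ⟨cls α (g - f), by
    rw [← cls_add]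
    exact congrArg _ (ContinuousMap.ext fun x => Nat.add_sub_cancel' (h x))⟩

lemma cls_clopenIndicator_ne_zero {A : Set X} (hA : IsClopen A) (hne : A.Nonempty) :
    cls α (clopenIndicator hA) ≠ 0 := by
  rw [ne_eq, cls_eq_zero_iff]
  intro h
  obtain ⟨x, hx⟩ := hne
  simpa [hx] using congrArg (· x) h

theorem Subequidecomposable.tle_cls {A B : Set X} (hA : IsClopen A) (hB : IsClopen B)
    (h : Subequidecomposable α A B) :
    tle α (cls α (clopenIndicator hA)) (cls α (clopenIndicator hB)) := by
  obtain ⟨n, P, γ, hP, hdisj, rfl, hdisj', hsub⟩ := h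
  have hQ : ∀ i, IsClopen (α (γ i) '' P i) := fun i => by
    rw [(α (γ i)).image_eq_preimage_symm]
    exact (hP i).preimage (α (γ i)).symm.continuous
  have hUQ : IsClopen (⋃ i, α (γ i) '' P i) := isClopen_iUnion_of_finite hQ
  have hrel : TypeRel α (clopenIndicator hA) (clopenIndicator hUQ) := by
    refine ⟨n, fun i => clopenIndicator (hP i), γ, clopenIndicator_iUnion hP hdisj hA, ?_⟩
    rw [clopenIndicator_iUnion hQ hdisj' hUQ]
    refine Finset.sum_congr rfl fun i _ => ?_
    rw [actC_clopenIndicator]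
    congr 1
    exact (α (γ i)).image_eq_preimage_symm (P i)
  rw [cls_eq_cls_iff.2 hrel]
  exact tle_cls_of_le (clopenIndicator_le_clopenIndicator _ _ (Set.iUnion_subset hsub))

theorem subequidecomposable_of_tle_cls {A B : Set X} (hA : IsClopen A) (hB : IsClopen B)
    (h : tle α (cls α (clopenIndicator hA)) (cls α (clopenIndicator hB))) :
    Subequidecomposable α A B := by
  obtain ⟨c, hc⟩ := h
  obtain ⟨u, rfl⟩ := cls_surjective α c
  rw [← cls_add, cls_eq_cls_iff] at hc
  obtain ⟨n, k, γ, hAk, hBk⟩ := hc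
  obtain ⟨k', hk'k, hAk'⟩ := ContinuousMap.exists_eq_sum_of_le_sum
    (hAk ▸ le_add_of_nonneg_right fun x => Nat.zero_le (u x) : clopenIndicator hA ≤ ∑ i, k i)
  have hsupp : ∀ i, α (γ i) '' support (k' i) ⊆ support (actC α (γ i) (k i)) := fun i => by
    rw [support_actC]
    exact Set.image_mono (ContinuousMap.support_mono_nat (hk'k i))
  have hdisjB := ContinuousMap.pairwise_disjoint_support_of_sum_le_one
      (f := fun i => actC α (γ i) (k i)) fun x => by
    rw [← ContinuousMap.sum_apply, ← hBk]
    exact clopenIndicator_le_one hB x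
  refine ⟨n, fun i => support (k' i), γ, fun i => (k' i).isClopen_support_nat, ?_, ?_,
    fun i j hij => (hdisjB hij).mono (hsupp i) (hsupp j), fun i => ?_⟩
  · exact ContinuousMap.pairwise_disjoint_support_of_sum_le_one fun x => by
      rw [← ContinuousMap.sum_apply, ← hAk']
      exact clopenIndicator_le_one hA x
  · rw [← support_clopenIndicator hA, hAk', ContinuousMap.support_sum_nat]
  · refine (hsupp i).trans ?_
    rw [← support_clopenIndicator hB, hBk, ContinuousMap.support_sum_nat]
    exact Set.subset_iUnion (fun i => support (actC α (γ i) (k i))) i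

end TypeSemigroup

section Comparison

variable {Γ : Type*} [Group Γ] {X : Type*} [TopologicalSpace X] (α : Γ →* X ≃ₜ X)

def EveryClopenSubequidecomposable : Prop :=
  ∀ A B : Set X, IsClopen A → IsClopen B → B.Nonempty → Subequidecomposable α A B

variable {α}

lemma dynComparison_iff_of_invRadon_eq_empty (h : invRadon α = ∅) :
    DynComparison α ↔ EveryClopenSubequidecomposable α := by
  simp [DynComparison, EveryClopenSubequidecomposable, h]

lemma invRadon_nonempty_of_subsingleton (α : Γ →* X ≃ₜ X) [Subsingleton X] (x : X) :
    (invRadon α).Nonempty := by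
  let : MeasurableSpace X := borel X
  have : BorelSpace X := ⟨rfl⟩
  refine ⟨Measure.dirac x, inferInstance, inferInstance, fun γ => ?_⟩
  rw [Measure.map_dirac' (α γ).continuous.measurable, Subsingleton.elim (α γ x) x]

lemma nontrivial_of_invRadon_eq_empty [Nonempty X] (h : invRadon α = ∅) : Nontrivial X := by
  by_contra hX
  rw [not_nontrivial_iff_subsingleton] at hX
  exact (invRadon_nonempty_of_subsingleton α (Classical.arbitrary X)).ne_empty h

lemma nonempty_of_typeSemigroup_ne_zero {a : TypeSemigroup α} (ha : a ≠ 0) : Nonempty X := by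
  by_contra hX
  rw [not_nonempty_iff] at hX
  obtain ⟨f, rfl⟩ := cls_surjective α a
  exact ha (by rw [Subsingleton.elim f 0, cls_zero])

theorem everyClopenSubequidecomposable_of_tle
    (h : ∀ a b : TypeSemigroup α, a ≠ 0 → b ≠ 0 → tle α a b) :
    EveryClopenSubequidecomposable α := by
  intro A B hA hB hBne
  refine subequidecomposable_of_tle_cls hA hB ?_
  rcases eq_or_ne (cls α (clopenIndicator hA)) 0 with hA0 | hA0
  · exact hA0 ▸ tle_zero_left _
  · exact h _ _ hA0 (cls_clopenIndicator_ne_zero hB hBne)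

namespace EveryClopenSubequidecomposable

theorem isMinimalAction [CompactSpace X] [T2Space X] [TotallyDisconnectedSpace X]
    (h : EveryClopenSubequidecomposable α) : IsMinimalAction α := by
  intro F hF hinv
  by_contra! hne
  obtain ⟨y, hy⟩ := hne.1
  obtain ⟨x, hx⟩ := Set.nonempty_compl.2 hne.2
  obtain ⟨B, hB, hxB, hBF⟩ :=
    isTopologicalBasis_isClopen.exists_subset_of_mem_open hx hF.isOpen_compl
  obtain ⟨n, P, γ, -, -, hPU, -, hPB⟩ := h Set.univ B isClopen_univ hB ⟨x, hxB⟩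
  obtain ⟨i, hi⟩ := Set.mem_iUnion.1 (hPU ▸ Set.mem_univ y)
  exact hBF (hPB i ⟨y, hi, rfl⟩) (hinv (γ i) ⟨y, hy, rfl⟩)

lemma one_tle_clopenIndicator (h : EveryClopenSubequidecomposable α) {B : Set X}
    (hB : IsClopen B) (hne : B.Nonempty) : tle α (cls α 1) (cls α (clopenIndicator hB)) := by
  simpa only [clopenIndicator_univ] using (h _ B isClopen_univ hB hne).tle_cls isClopen_univ hB

lemma add_self_tle_one [TotallySeparatedSpace X] [Nontrivial X]
    (h : EveryClopenSubequidecomposable α) : tle α (cls α 1 + cls α 1) (cls α 1) := by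
  obtain ⟨x, y, hxy⟩ := exists_pair_ne X
  obtain ⟨U, hU, hxU, hyU⟩ := exists_isClopen_of_totally_separated hxy
  have := tle_add (h.one_tle_clopenIndicator hU ⟨x, hxU⟩)
    (h.one_tle_clopenIndicator hU.compl ⟨y, hyU⟩)
  rw [← cls_add, ← cls_add, clopenIndicator_add_compl] at this
  exact this

theorem tle_of_ne_zero [CompactSpace X] [TotallySeparatedSpace X] [Nontrivial X]
    (h : EveryClopenSubequidecomposable α) (a : TypeSemigroup α) {b : TypeSemigroup α}
    (hb : b ≠ 0) : tle α a b := by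
  obtain ⟨f, rfl⟩ := cls_surjective α a
  obtain ⟨g, rfl⟩ := cls_surjective α b
  have hg : (support g).Nonempty := by
    rw [support_nonempty_iff]
    rintro hg
    exact hb (by rw [show g = 0 from ContinuousMap.ext (congrFun hg), cls_zero])
  obtain ⟨N, hN⟩ := f.exists_le_nsmul_one
  refine tle_trans (tle_cls_of_le hN) ?_
  rw [cls_nsmul]
  refine tle_trans (nsmul_tle_of_add_self_tle h.add_self_tle_one N) ?_
  exact tle_trans (h.one_tle_clopenIndicator g.isClopen_support_nat hg)
    (tle_cls_of_le (clopenIndicator_support_le g))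

end EveryClopenSubequidecomposable

end Comparison

theorem stmt7_general {Γ : Type*} [Group Γ]
    {X : Type*} [TopologicalSpace X] [CompactSpace X] [T2Space X]
    [TotallyDisconnectedSpace X]
    (α : Γ →* (X ≃ₜ X)) (hempty : invRadon α = ∅) :
    DynComparison α ↔
      (IsMinimalAction α ∧ ∀ a b : TypeSemigroup α, a ≠ 0 → b ≠ 0 → tle α a b) := by
  rw [dynComparison_iff_of_invRadon_eq_empty hempty]
  refine ⟨fun h => ⟨h.isMinimalAction, fun a b ha hb => ?_⟩,
    fun h => everyClopenSubequidecomposable_of_tle h.2⟩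
  have := nonempty_of_typeSemigroup_ne_zero ha
  have := nontrivial_of_invRadon_eq_empty hempty
  exact h.tle_of_ne_zero a hb

/-- Let `α` be an action of a countable group `Γ` by homeomorphisms on a
nonempty compact Hausdorff `0`-dimensional space `X` such that `M(α) = ∅`. Then `α` has
dynamical comparison iff `α` is minimal and `a ≤ b` for all nonzero `a, b ∈ T(α)`. -/
theorem stmt7 {Γ : Type*} [Group Γ] [Countable Γ]
    {X : Type*} [TopologicalSpace X] [CompactSpace X] [T2Space X]
    [TotallyDisconnectedSpace X] [Nonempty X]
    (α : Γ →* (X ≃ₜ X)) (hempty : invRadon α = ∅) :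
    DynComparison α ↔
      (IsMinimalAction α ∧ ∀ a b : TypeSemigroup α, a ≠ 0 → b ≠ 0 → tle α a b) :=
  stmt7_general α hempty
end

section
/- Let α be an action of a countable group Γ by homeomorphisms on a compact Hausdorff 0-dimensional space X. For all a, b ∈ T(α) the following are equivalent: (1) there exists n ∈ ℕ such that (n+1)a ≤ nb; (2) there exists n ∈ ℕ such that a ≤ nb, and for every state μ ∈ M_∞(α) with μ(b) = 1 one has μ(a) < 1. -/
open MeasureTheory Set
open scoped ENNReal

/-! Suppose no `(n+1)a ≤ nb`. Pass to the Grothendieck group `G` of the order ideal generated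
by `b`, preordered by the image of that ideal, with order unit `u = [b]`. The gauge
`p(g) = inf {m/n : n g ≤ m u}` is subadditive with `p(0) = 0`, and `p([a]) ≥ 1`: an inequality
`n[a] ≤ m[b]` with `m < n` holds in `M` only up to an absorbing summand `e ≤ Kb`, which is
outweighed after multiplying by `K + 1`. A Hahn–Banach argument for abelian groups (Zorn on
subgroups of `G × ℝ` lying below the graph of `p`) yields an additive `f ≤ p` with
`f([a]) = p([a])`; such an `f` is positive with `f(u) = 1`, and extended by `∞` off the order
ideal it is the required state. Conversely `ν((n+1)a) ≤ ν(nb) = n` forces `ν(a) < 1`. -/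

section HahnBanach

variable {G : Type*} [AddCommGroup G]

/-- Subgroups of `G × ℝ` dominated by `p` stand for graphs of partial additive maps below `p`;
when `p 0 = 0` such a subgroup is automatically a graph. -/
def Dominated (p : G → ℝ) (S : AddSubgroup (G × ℝ)) : Prop := ∀ s ∈ S, s.2 ≤ p s.1

variable {p : G → ℝ} {S : AddSubgroup (G × ℝ)}

theorem Dominated.exists_maximal (hS : Dominated p S) :
    ∃ T, S ≤ T ∧ Maximal (Dominated p) T := by
  obtain ⟨T, hST, hT⟩ := zorn_le_nonempty₀ {T | Dominated p T} (fun c hc hchain T hT => by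
    refine ⟨sSup c, fun s hs => ?_, fun _ => le_sSup⟩
    obtain ⟨U, hU, hsU⟩ := (AddSubgroup.mem_sSup_of_directedOn ⟨T, hT⟩ hchain.directedOn).1 hs
    exact hc hU s hsU) S hS
  exact ⟨T, hST, hT⟩

variable (hp0 : p 0 = 0) (hp : ∀ x y, p (x + y) ≤ p x + p y)
include hp0 hp

theorem apply_nsmul_le (x : G) (n : ℕ) : p (n • x) ≤ n * p x := by
  induction n with
  | zero => simp [hp0]
  | succ n ih =>
    rw [succ_nsmul, Nat.cast_succ, add_one_mul]
    exact (hp _ _).trans (add_le_add_left ih _)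

theorem Dominated.sub_div_le_sub_div (hS : Dominated p S) (g : G) {s t : G × ℝ} (hs : s ∈ S)
    (ht : t ∈ S) {k l : ℕ} (hk : 0 < k) (hl : 0 < l) :
    (t.2 - p (t.1 - l • g)) / l ≤ (p (s.1 + k • g) - s.2) / k := by
  have hsum := hS _ (S.add_mem (S.nsmul_mem ht k) (S.nsmul_mem hs l))
  have hsplit : (k • t + l • s).1 = l • (s.1 + k • g) + k • (t.1 - l • g) := by
    simp only [Prod.fst_add, Prod.smul_fst, smul_add, smul_sub, smul_smul, mul_comm l k]
    abel
  rw [hsplit] at hsum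
  have h1 := apply_nsmul_le hp0 hp (s.1 + k • g) l
  have h2 := apply_nsmul_le hp0 hp (t.1 - l • g) k
  have h3 := hp (l • (s.1 + k • g)) (k • (t.1 - l • g))
  simp only [Prod.snd_add, Prod.smul_snd, nsmul_eq_mul] at hsum
  rw [div_le_div_iff₀ (by exact_mod_cast hl) (by exact_mod_cast hk)]
  nlinarith

theorem Dominated.exists_sup_zmultiples (hS : Dominated p S) (g : G) :
    ∃ c : ℝ, Dominated p (S ⊔ AddSubgroup.zmultiples (g, c)) := by
  set L := {r : ℝ | ∃ t ∈ S, ∃ l : ℕ, 0 < l ∧ r = (t.2 - p (t.1 - l • g)) / l}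
  have hL : L.Nonempty := ⟨_, 0, S.zero_mem, 1, one_pos, rfl⟩
  have hupper : ∀ s ∈ S, ∀ k : ℕ, 0 < k → sSup L ≤ (p (s.1 + k • g) - s.2) / k := by
    intro s hs k hk
    refine csSup_le hL ?_
    rintro _ ⟨t, ht, l, hl, rfl⟩
    exact hS.sub_div_le_sub_div hp0 hp g hs ht hk hl
  have hbdd : BddAbove L := ⟨_, fun r hr => by
    obtain ⟨t, ht, l, hl, rfl⟩ := hr
    exact hS.sub_div_le_sub_div hp0 hp g S.zero_mem ht one_pos hl⟩
  refine ⟨sSup L, ?_⟩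
  rintro _ hx
  obtain ⟨s, hs, _, hz, rfl⟩ := AddSubgroup.mem_sup.1 hx
  obtain ⟨k, rfl⟩ := AddSubgroup.mem_zmultiples_iff.1 hz
  obtain ⟨n, rfl | rfl⟩ := Int.eq_nat_or_neg k
  · rcases Nat.eq_zero_or_pos n with rfl | hn
    · simpa using hS s hs
    have := hupper s hs n hn
    rw [le_div_iff₀ (by exact_mod_cast hn)] at this
    simp only [natCast_zsmul, Prod.fst_add, Prod.snd_add, Prod.smul_fst, Prod.smul_snd,
      nsmul_eq_mul]
    linarith
  · rcases Nat.eq_zero_or_pos n with rfl | hn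
    · simpa using hS s hs
    have := le_csSup hbdd ⟨s, hs, n, hn, rfl⟩
    rw [div_le_iff₀ (by exact_mod_cast hn)] at this
    simp only [neg_smul, natCast_zsmul, ← sub_eq_add_neg, Prod.fst_sub, Prod.snd_sub,
      Prod.smul_fst, Prod.smul_snd, nsmul_eq_mul]
    linarith

theorem exists_addMonoidHom_extension_of_le_subadditive (hS : Dominated p S) :
    ∃ f : G →+ ℝ, (∀ s ∈ S, f s.1 = s.2) ∧ ∀ x, f x ≤ p x := by
  obtain ⟨T, hST, hT⟩ := hS.exists_maximal
  have htotal : ∀ x, ∃ r, (x, r) ∈ T := fun x => by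
    obtain ⟨c, hc⟩ := hT.1.exists_sup_zmultiples hp0 hp x
    exact ⟨c, hT.2 hc le_sup_left (le_sup_right (b := AddSubgroup.zmultiples (x, c))
      (AddSubgroup.mem_zmultiples _))⟩
  have hunique : ∀ {x r r'}, (x, r) ∈ T → (x, r') ∈ T → r = r' := fun hr hr' => by
    have h1 := hT.1 _ (T.sub_mem hr hr')
    have h2 := hT.1 _ (T.sub_mem hr' hr)
    simp only [Prod.fst_sub, Prod.snd_sub, sub_self, hp0] at h1 h2
    linarith
  choose f hf using htotal
  refine ⟨AddMonoidHom.mk' f fun x y => hunique (hf (x + y)) (T.add_mem (hf x) (hf y)),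
    fun s hs => hunique (hf s.1) (hST hs), fun x => hT.1 _ (hf x)⟩

end HahnBanach

section OrderUnit

variable {G : Type*} [AddCommGroup G] (P : AddSubmonoid G) (u : G)

noncomputable def unitGauge (g : G) : ℝ :=
  sInf {r : ℝ | ∃ (m : ℤ) (n : ℕ), 0 < n ∧ m • u - n • g ∈ P ∧ r = m / n}

variable {P u}

theorem toNat_zsmul_sub_mem (hu : u ∈ P) {m : ℤ} {g : G} (h : m • u - g ∈ P) :
    m.toNat • u - g ∈ P := by
  have : m.toNat • u - g = (m • u - g) + (-m).toNat • u := by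
    have e : (m.toNat : ℤ) = m + (-m).toNat := by omega
    rw [← natCast_zsmul, e, add_zsmul, natCast_zsmul]
    abel
  rw [this]
  exact P.add_mem h (P.nsmul_mem hu _)

section Gauge

variable (hunit : ∀ g, ∃ k : ℕ, k • u - g ∈ P) (hpos : ∀ j : ℤ, j • u ∈ P → 0 ≤ j)
include hunit

theorem le_unitGauge {g : G} {c : ℝ}
    (h : ∀ (m : ℤ) (n : ℕ), 0 < n → m • u - n • g ∈ P → c ≤ m / n) : c ≤ unitGauge P u g := by
  obtain ⟨k, hk⟩ := hunit g
  refine le_csInf ⟨k / 1, k, 1, one_pos, by simpa using hk, by simp⟩ ?_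
  rintro _ ⟨m, n, hn, hmn, rfl⟩
  exact h m n hn hmn

include hpos

theorem unitGauge_le {g : G} {m : ℤ} {n : ℕ} (hn : 0 < n) (h : m • u - n • g ∈ P) :
    unitGauge P u g ≤ m / n := by
  obtain ⟨k, hk⟩ := hunit (-g)
  refine csInf_le ⟨-k, ?_⟩ ⟨m, n, hn, h, rfl⟩
  rintro _ ⟨m', n', hn', h', rfl⟩
  have := hpos (n' * k + m') <| by
    convert P.add_mem (P.nsmul_mem hk n') h' using 1
    module
  rw [le_div_iff₀ (by exact_mod_cast hn')]
  have : (0 : ℝ) ≤ n' * k + m' := by exact_mod_cast this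
  linarith

theorem unitGauge_zero : unitGauge P u 0 = 0 := by
  refine le_antisymm (by simpa using unitGauge_le hunit hpos one_pos (m := 0) (g := 0) (by simp))
    (le_unitGauge hunit fun m n hn h => div_nonneg ?_ n.cast_nonneg)
  exact_mod_cast hpos m (by simpa using h)

theorem unitGauge_add_le (g h : G) :
    unitGauge P u (g + h) ≤ unitGauge P u g + unitGauge P u h := by
  have key : ∀ (m : ℤ) (n : ℕ), 0 < n → m • u - n • g ∈ P → ∀ (m' : ℤ) (n' : ℕ), 0 < n' →
      m' • u - n' • h ∈ P → unitGauge P u (g + h) ≤ m / n + m' / n' := by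
    intro m n hn hm m' n' hn' hm'
    have := unitGauge_le hunit hpos (Nat.mul_pos hn hn') (m := m * n' + m' * n) (g := g + h) <| by
      convert P.add_mem (P.nsmul_mem hm n') (P.nsmul_mem hm' n) using 1
      simp only [smul_sub, smul_add, ← natCast_zsmul, smul_smul, add_smul]
      push_cast
      module
    convert this using 1
    push_cast
    field_simp
  rw [← sub_le_iff_le_add]
  refine le_unitGauge hunit fun m' n' hn' hm' => ?_
  rw [sub_le_comm]
  refine le_unitGauge hunit fun m n hn hm => ?_
  linarith [key m' n' hn' hm' m n hn hm]

theorem natCast_mul_unitGauge_le (g : G) {n : ℕ} (hn : 0 < n) :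
    n * unitGauge P u g ≤ unitGauge P u (n • g) := by
  refine le_unitGauge hunit fun m k hk h => ?_
  have := unitGauge_le hunit hpos (Nat.mul_pos hk hn) (m := m) (g := g) (by rwa [mul_nsmul'])
  rw [Nat.cast_mul, ← div_div, le_div_iff₀ (by exact_mod_cast hn)] at this
  linarith

theorem intCast_mul_unitGauge_le (g : G) (k : ℤ) :
    k * unitGauge P u g ≤ unitGauge P u (k • g) := by
  obtain ⟨n, rfl | rfl⟩ := Int.eq_nat_or_neg k
  · rcases Nat.eq_zero_or_pos n with rfl | hn
    · simp [unitGauge_zero hunit hpos]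
    simpa using natCast_mul_unitGauge_le hunit hpos g hn
  · have h1 := unitGauge_add_le hunit hpos (n • g) (-(n • g))
    have h2 := apply_nsmul_le (unitGauge_zero hunit hpos) (unitGauge_add_le hunit hpos) g n
    rw [add_neg_cancel, unitGauge_zero hunit hpos] at h1
    simp only [Int.cast_neg, Int.cast_natCast, neg_smul, natCast_zsmul]
    linarith

end Gauge

section Nondegenerate

variable (hu : u ∈ P) (hunit : ∀ g, ∃ k : ℕ, k • u - g ∈ P) {x : G}
  (hx : ∀ m n : ℕ, m < n → m • u - n • x ∉ P)
include hu hunit hx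

theorem nonneg_of_zsmul_mem {j : ℤ} (hj : j • u ∈ P) : 0 ≤ j := by
  by_contra! hneg
  obtain ⟨k, hk⟩ := hunit x
  have hmem : (k + k * j) • u - x ∈ P := by
    convert P.add_mem (P.nsmul_mem hj k) hk using 1
    module
  have : (k + k * j).toNat = 0 := Int.toNat_eq_zero.2 (by nlinarith)
  exact hx 0 1 one_pos (by simpa [this] using toNat_zsmul_sub_mem hu hmem)

theorem one_le_unitGauge : 1 ≤ unitGauge P u x := by
  refine le_unitGauge hunit fun m n hn h => ?_
  have hnm : n ≤ m.toNat := not_lt.1 fun hlt => hx _ _ hlt (toNat_zsmul_sub_mem hu h)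
  have : (n : ℤ) ≤ m := by omega
  rw [one_le_div (by exact_mod_cast hn)]
  exact_mod_cast this

theorem exists_addMonoidHom_nonneg_of_forall_not_nsmul_le :
    ∃ f : G →+ ℝ, (∀ g ∈ P, 0 ≤ f g) ∧ f u = 1 ∧ 1 ≤ f x := by
  have hpos : ∀ j : ℤ, j • u ∈ P → 0 ≤ j := fun _ => nonneg_of_zsmul_mem hu hunit hx
  have hS : Dominated (unitGauge P u) (AddSubgroup.zmultiples (x, unitGauge P u x)) := by
    rintro _ hs
    obtain ⟨k, rfl⟩ := AddSubgroup.mem_zmultiples_iff.1 hs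
    simpa using intCast_mul_unitGauge_le hunit hpos x k
  obtain ⟨f, hfx, hfp⟩ := exists_addMonoidHom_extension_of_le_subadditive
    (unitGauge_zero hunit hpos) (unitGauge_add_le hunit hpos) hS
  have hle {g : G} {m : ℤ} (h : m • u - (1 : ℕ) • g ∈ P) : f g ≤ m := by
    simpa using (hfp g).trans (unitGauge_le hunit hpos one_pos h)
  refine ⟨f, fun g hg => ?_, le_antisymm ?_ ?_, ?_⟩
  · simpa using hle (g := -g) (m := 0) (by simpa using hg)
  · simpa using hle (g := u) (m := 1) (by simp)
  · simpa using hle (g := -u) (m := -1) (by simp)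
  · rw [hfx _ (AddSubgroup.mem_zmultiples _)]
    exact one_le_unitGauge hu hunit hx

end Nondegenerate

end OrderUnit

section Monoid

variable {M : Type*} [AddCommMonoid M] {a b : M}

def orderIdeal (b : M) : AddSubmonoid M where
  carrier := {x | ∃ (k : ℕ) (c : M), x + c = k • b}
  zero_mem' := ⟨0, 0, by simp⟩
  add_mem' := by
    rintro x y ⟨k, c, hc⟩ ⟨l, d, hd⟩
    exact ⟨k + l, c + d, by rw [add_nsmul, ← hc, ← hd]; abel⟩

theorem mem_orderIdeal_of_add_mem {x y : M} (h : x + y ∈ orderIdeal b) : x ∈ orderIdeal b := by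
  obtain ⟨k, c, hc⟩ := h
  exact ⟨k, y + c, by rw [← add_assoc, hc]⟩

theorem self_mem_orderIdeal (b : M) : b ∈ orderIdeal b := ⟨1, 0, by simp⟩

theorem exists_succ_nsmul_add_eq_of_absorbing {c e : M} (he : e ∈ orderIdeal b) {m n : ℕ}
    (hmn : m < n) (h : e + (n • a + c) = e + m • b) :
    ∃ (k : ℕ) (d : M), (k + 1) • a + d = k • b := by
  have hiter : ∀ j : ℕ, e + j • (n • a + c) = e + j • (m • b) := fun j => by
    induction j with
    | zero => simp
    | succ j ih =>
      calc e + (j + 1) • (n • a + c) = (e + j • (n • a + c)) + (n • a + c) := by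
            rw [succ_nsmul, add_assoc]
        _ = (e + (n • a + c)) + j • (m • b) := by rw [ih]; abel
        _ = e + (j + 1) • (m • b) := by rw [h, succ_nsmul]; abel
  obtain ⟨K, d, hd⟩ := he
  obtain ⟨r, hr⟩ := Nat.exists_eq_add_of_le (show (K + 1) * m + K + 1 ≤ (K + 1) * n by nlinarith)
  refine ⟨(K + 1) * m + K, r • a + (K + 1) • c + (e + d), ?_⟩
  calc ((K + 1) * m + K + 1) • a + (r • a + (K + 1) • c + (e + d))
      = e + (K + 1) • (n • a + c) + d := by rw [smul_add, smul_smul, hr, add_nsmul a _ r]; abel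
    _ = e + (K + 1) • (m • b) + d := by rw [hiter]
    _ = ((K + 1) * m + K) • b := by rw [add_right_comm, hd, smul_smul, add_nsmul, add_comm]

theorem AddSubmonoid.exists_addMonoidHom_extension_top (W : AddSubmonoid M)
    (hW : ∀ x y, x + y ∈ W → x ∈ W) (φ : W →+ ℝ≥0∞) : ∃ ν : M →+ ℝ≥0∞, ∀ x : W, ν x = φ x := by
  classical
  refine ⟨{ toFun := fun x => if h : x ∈ W then φ ⟨x, h⟩ else ⊤
            map_zero' := by rw [dif_pos W.zero_mem]; exact φ.map_zero
            map_add' := fun x y => ?_ }, fun x => by simp⟩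
  by_cases hx : x ∈ W
  · by_cases hy : y ∈ W
    · simpa [hx, hy, W.add_mem hx hy] using φ.map_add ⟨x, hx⟩ ⟨y, hy⟩
    · have hxy : x + y ∉ W := fun h => hy (hW y x (by rwa [add_comm]))
      simp [hy, hxy]
  · have hxy : x + y ∉ W := fun h => hx (hW x y h)
    simp [hx, hxy]

open Algebra in
theorem exists_nsmul_sub_mem_mrange_of (g : GrothendieckAddGroup (orderIdeal b)) :
    ∃ k : ℕ, k • GrothendieckAddGroup.of ⟨b, self_mem_orderIdeal b⟩ - g ∈
      AddMonoidHom.mrange (GrothendieckAddGroup.of (M := orderIdeal b)) := by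
  obtain ⟨⟨x, y⟩, hxy⟩ := (AddLocalization.addMonoidOf ⊤).surj g
  obtain ⟨k, c, hc⟩ := x.2
  have hcW : c ∈ orderIdeal b := ⟨k, x, by rw [add_comm, hc]⟩
  refine ⟨k, ⟨⟨c, hcW⟩ + y, ?_⟩⟩
  change g + GrothendieckAddGroup.of y.1 = GrothendieckAddGroup.of x at hxy
  have hkb : k • (⟨b, self_mem_orderIdeal b⟩ : orderIdeal b) = x + ⟨c, hcW⟩ :=
    Subtype.ext (by simp [hc])
  rw [← map_nsmul, hkb, map_add, map_add, ← hxy]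
  abel

open Algebra in
theorem nsmul_sub_nsmul_not_mem_mrange_of (h : ∀ n : ℕ, ∀ c, (n + 1) • a + c ≠ n • b)
    (ha : a ∈ orderIdeal b) {m n : ℕ} (hmn : m < n) :
    m • GrothendieckAddGroup.of ⟨b, self_mem_orderIdeal b⟩ -
        n • GrothendieckAddGroup.of (⟨a, ha⟩ : orderIdeal b) ∉
      AddMonoidHom.mrange (GrothendieckAddGroup.of (M := orderIdeal b)) := by
  rintro ⟨c, hc⟩
  have : GrothendieckAddGroup.of (n • (⟨a, ha⟩ : orderIdeal b) + c) =
      GrothendieckAddGroup.of (m • ⟨b, self_mem_orderIdeal b⟩) := by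
    rw [map_add, hc, map_nsmul, map_nsmul]
    abel
  obtain ⟨e, he⟩ := ((AddLocalization.addMonoidOf ⊤).eq_iff_exists).1 this
  obtain ⟨k, d, hkd⟩ := exists_succ_nsmul_add_eq_of_absorbing (a := a) (c := c.1) e.1.2 hmn
    (by simpa using congrArg Subtype.val he)
  exact h k d hkd

open Algebra in
theorem exists_addMonoidHom_ennreal_of_forall_not_succ_nsmul_le
    (hab : ∃ (N : ℕ) (c : M), a + c = N • b) (h : ∀ n : ℕ, ∀ c, (n + 1) • a + c ≠ n • b) :
    ∃ ν : M →+ ℝ≥0∞, ν b = 1 ∧ 1 ≤ ν a := by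
  obtain ⟨N, c, hc⟩ := hab
  have hu : GrothendieckAddGroup.of ⟨b, self_mem_orderIdeal b⟩ ∈
      AddMonoidHom.mrange (GrothendieckAddGroup.of (M := orderIdeal b)) := ⟨_, rfl⟩
  have ha : a ∈ orderIdeal b := ⟨N, c, hc⟩
  obtain ⟨f, hf0, hfb, hfa⟩ := exists_addMonoidHom_nonneg_of_forall_not_nsmul_le hu
    exists_nsmul_sub_mem_mrange_of
    (fun m n hmn => nsmul_sub_nsmul_not_mem_mrange_of h ha hmn)
  obtain ⟨ν, hν⟩ := (orderIdeal b).exists_addMonoidHom_extension_top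
    (fun x y => mem_orderIdeal_of_add_mem)
    { toFun := fun w => ENNReal.ofReal (f (GrothendieckAddGroup.of w))
      map_zero' := by simp
      map_add' := fun v w => by
        simp only [map_add]
        exact ENNReal.ofReal_add (hf0 _ ⟨v, rfl⟩) (hf0 _ ⟨w, rfl⟩) }
  refine ⟨ν, ?_, ?_⟩
  · rw [hν ⟨b, self_mem_orderIdeal b⟩]
    change ENNReal.ofReal (f _) = 1
    rw [hfb, ENNReal.ofReal_one]
  · rw [hν ⟨a, ha⟩]
    exact ENNReal.one_le_ofReal.2 hfa

theorem AddMonoidHom.apply_lt_one_of_succ_nsmul_add_eq (ν : M →+ ℝ≥0∞) {n : ℕ} {c : M}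
    (hc : (n + 1) • a + c = n • b) (hb : ν b = 1) : ν a < 1 := by
  have hν := congrArg ν hc
  simp only [map_add, map_nsmul, hb, nsmul_eq_mul, mul_one] at hν
  by_contra! ha
  have : ((n + 1 : ℕ) : ℝ≥0∞) ≤ n := calc
    ((n + 1 : ℕ) : ℝ≥0∞) ≤ (n + 1 : ℕ) * ν a := le_mul_of_one_le_right' ha
    _ ≤ (n + 1 : ℕ) * ν a + ν c := le_self_add
    _ = n := by exact_mod_cast hν
  exact absurd (by exact_mod_cast this) n.not_succ_le_self

end Monoid

theorem stmt9_general {Γ : Type*} [Group Γ]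
    {X : Type*} [TopologicalSpace X]
    (α : Γ →* (X ≃ₜ X)) (a b : TypeSemigroup α) :
    (∃ n : ℕ, tle α ((n + 1) • a) (n • b)) ↔
      ((∃ n : ℕ, tle α a (n • b)) ∧
        ∀ ν : TypeSemigroup α → ℝ≥0∞, IsState α ν → ν b = 1 → ν a < 1) := by
  constructor
  · rintro ⟨n, c, hc⟩
    refine ⟨⟨n, n • a + c, by rw [← hc, succ_nsmul', add_assoc]⟩, fun ν hν hb => ?_⟩
    exact AddMonoidHom.apply_lt_one_of_succ_nsmul_add_eq
      { toFun := ν, map_zero' := hν.1, map_add' := hν.2 } hc hb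
  · rintro ⟨hab, hstate⟩
    by_contra! hno
    obtain ⟨ν, hb, ha⟩ :=
      exists_addMonoidHom_ennreal_of_forall_not_succ_nsmul_le hab fun n c hc => hno n ⟨c, hc⟩
    exact (hstate ν ⟨ν.map_zero, ν.map_add⟩ hb).not_ge ha

/-- For all `a, b ∈ T(α)` the following are equivalent: (1) there is
`n ∈ ℕ` with `(n+1)a ≤ nb`; (2) there is `n ∈ ℕ` with `a ≤ nb`, and every state
`ν ∈ M_∞(α)` with `ν(b) = 1` satisfies `ν(a) < 1`. -/
theorem stmt9 {Γ : Type*} [Group Γ] [Countable Γ]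
    {X : Type*} [TopologicalSpace X] [CompactSpace X] [T2Space X]
    [TotallyDisconnectedSpace X]
    (α : Γ →* (X ≃ₜ X)) (a b : TypeSemigroup α) :
    (∃ n : ℕ, tle α ((n + 1) • a) (n • b)) ↔
      ((∃ n : ℕ, tle α a (n • b)) ∧
        ∀ ν : TypeSemigroup α → ℝ≥0∞, IsState α ν → ν b = 1 → ν a < 1) :=
  stmt9_general α a b
end
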